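/- Let Ω, Ω_I ⊆ ℝⁿ be disjoint measurable sets and set S := Ω ∪ Ω_I. Let α : ℝⁿ × ℝⁿ → ℝⁿ be antisymmetric (α(x,y) = -α(y,x) for all x,y), and let u, v : ℝⁿ → ℝ be such that the functions (x,y) ↦ v(x) (u(y)-u(x)) |α(x,y)|² and (x,y) ↦ (u(y)-u(x))(v(y)-v(x)) |α(x,y)|² are integrable on S × S. Then the nonlocal Green's identity holds: ∫_Ω v(x) D_S(D*u)(x) dx = ∫_S ∫_S (D*v)(x,y) · (D*u)(x,y) dy dx − ∫_{Ω_I} v(x) D_S(D*u)(x) dx. -/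
import Mathlib


open MeasureTheory RealInnerProductSpace

/-- Euclidean space `ℝⁿ`. -/
abbrev Euc (n : ℕ) := EuclideanSpace ℝ (Fin n)

/-- The nonlocal divergence over `S`: `D_S(f)(x) := ∫_S (f(x,y) + f(y,x)) · α(x,y) dy`. -/
noncomputable def nldivS {n : ℕ} (S : Set (Euc n)) (a f : Euc n → Euc n → Euc n)
    (x : Euc n) : ℝ :=
  ∫ y in S, ⟪f x y + f y x, a x y⟫

/-- The nonlocal gradient adjoint: `(D*u)(x,y) := -(u(y) - u(x)) α(x,y)`. -/
noncomputable def nlgrad {n : ℕ} (a : Euc n → Euc n → Euc n) (u : Euc n → ℝ)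
    (x y : Euc n) : Euc n :=
  -(u y - u x) • a x y

set_option maxHeartbeats 1000000 in
/-- The nonlocal Green's identity:
`∫_Ω v D_S(D*u) dx = ∫_S ∫_S D*v · D*u dy dx − ∫_{Ω_I} v D_S(D*u) dx`
where `S = Ω ∪ Ω_I` and `Ω`, `Ω_I` are disjoint measurable sets. -/
theorem nonlocal_greens_identity {n : ℕ}
    (Ω ΩI : Set (Euc n)) (hΩ : MeasurableSet Ω) (hΩI : MeasurableSet ΩI)
    (hdisj : Disjoint Ω ΩI)
    (a : Euc n → Euc n → Euc n)
    (ha : ∀ x y, a x y = - a y x)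
    (u v : Euc n → ℝ)
    (h1 : IntegrableOn
      (fun p : Euc n × Euc n => v p.1 * (u p.2 - u p.1) * ‖a p.1 p.2‖ ^ 2)
      ((Ω ∪ ΩI) ×ˢ (Ω ∪ ΩI)))
    (h2 : IntegrableOn
      (fun p : Euc n × Euc n => (u p.2 - u p.1) * (v p.2 - v p.1) * ‖a p.1 p.2‖ ^ 2)
      ((Ω ∪ ΩI) ×ˢ (Ω ∪ ΩI))) :
    (∫ x in Ω, v x * nldivS (Ω ∪ ΩI) a (nlgrad a u) x) =
      (∫ x in Ω ∪ ΩI, ∫ y in Ω ∪ ΩI, ⟪nlgrad a v x y, nlgrad a u x y⟫) -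
        ∫ x in ΩI, v x * nldivS (Ω ∪ ΩI) a (nlgrad a u) x := by
  classical
  set S := Ω ∪ ΩI with hS
  have hSm : MeasurableSet S := hΩ.union hΩI
  set μ := (volume : Measure (Euc n)).restrict S with hμ
  -- pointwise identities
  have key1 : ∀ x y : Euc n, ⟪nlgrad a u x y + nlgrad a u y x, a x y⟫ =
      (-2 : ℝ) * ((u y - u x) * ‖a x y‖ ^ 2) := by
    intro x y
    have hxy : nlgrad a u x y + nlgrad a u y x = ((-2 : ℝ) * (u y - u x)) • a x y := by
      simp only [nlgrad, ha y x, smul_neg, neg_smul, neg_neg]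
      module
    rw [hxy, real_inner_smul_left, real_inner_self_eq_norm_sq]
    ring
  have key2 : ∀ x y : Euc n, ⟪nlgrad a v x y, nlgrad a u x y⟫ =
      (u y - u x) * (v y - v x) * ‖a x y‖ ^ 2 := by
    intro x y
    simp only [nlgrad, inner_neg_neg, real_inner_smul_left, real_inner_smul_right,
      real_inner_self_eq_norm_sq]
    ring
  set F : Euc n × Euc n → ℝ := fun p => v p.1 * (u p.2 - u p.1) * ‖a p.1 p.2‖ ^ 2 with hFdef
  set G : Euc n × Euc n → ℝ := fun p => (u p.2 - u p.1) * (v p.2 - v p.1) * ‖a p.1 p.2‖ ^ 2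
    with hGdef
  set H : Euc n × Euc n → ℝ := fun p => v p.2 * (u p.2 - u p.1) * ‖a p.1 p.2‖ ^ 2 with hHdef
  have hprod : μ.prod μ = (volume : Measure (Euc n × Euc n)).restrict (S ×ˢ S) := by
    rw [hμ, Measure.prod_restrict, ← Measure.volume_eq_prod]
  have hF : Integrable F (μ.prod μ) := by rw [hprod]; exact h1
  have hG : Integrable G (μ.prod μ) := by rw [hprod]; exact h2
  have hGHF : G = H - F := by
    funext p; simp only [hGdef, hHdef, hFdef, Pi.sub_apply]; ring
  have hH : Integrable H (μ.prod μ) := by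
    have : H = G + F := by funext p; simp [hGHF]
    rw [this]; exact hG.add hF
  -- swap argument : ∫ H = - ∫ F
  have hnorm : ∀ x y : Euc n, ‖a y x‖ = ‖a x y‖ := by
    intro x y; rw [ha y x, norm_neg]
  have hswap : ∫ p, H p ∂(μ.prod μ) = - ∫ p, F p ∂(μ.prod μ) := by
    have hc : ∀ p : Euc n × Euc n, H p.swap = - F p := by
      intro p
      simp only [hHdef, hFdef, Prod.swap, hnorm p.1 p.2]
      ring
    rw [← integral_prod_swap H]
    rw [integral_congr_ae (Filter.Eventually.of_forall hc), integral_neg]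
  have hGint : ∫ p, G p ∂(μ.prod μ) = (-2 : ℝ) * ∫ p, F p ∂(μ.prod μ) := by
    have : ∫ p, G p ∂(μ.prod μ) = ∫ p, (H p - F p) ∂(μ.prod μ) := by
      refine integral_congr_ae (Filter.Eventually.of_forall fun p => ?_)
      rw [hGHF]; rfl
    rw [this, integral_sub hH hF, hswap]; ring
  -- the function under the outer integral
  have hg : ∀ x : Euc n, v x * nldivS S a (nlgrad a u) x
      = ∫ y, (-2 : ℝ) * F (x, y) ∂μ := by
    intro x
    unfold nldivS
    rw [← integral_const_mul]
    refine integral_congr_ae (Filter.Eventually.of_forall fun y => ?_)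
    simp only [key1, hFdef]
    ring
  have hgi : Integrable (fun x => v x * nldivS S a (nlgrad a u) x) μ := by
    have : Integrable (fun x => ∫ y, (-2 : ℝ) * F (x, y) ∂μ) μ :=
      (hF.const_mul (-2 : ℝ)).integral_prod_left
    exact this.congr (Filter.Eventually.of_forall fun x => (hg x).symm)
  have hio : ∀ T : Set (Euc n), MeasurableSet T → T ⊆ S →
      IntegrableOn (fun x => v x * nldivS S a (nlgrad a u) x) T volume := by
    intro T hTm hTs
    have := hgi.integrableOn (s := T)
    rwa [IntegrableOn, hμ, Measure.restrict_restrict hTm, Set.inter_eq_left.mpr hTs] at this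
  rw [eq_sub_iff_add_eq, ← setIntegral_union hdisj hΩI
    (hio Ω hΩ Set.subset_union_left) (hio ΩI hΩI Set.subset_union_right)]
  have lhs_eq : ∫ x in S, v x * nldivS S a (nlgrad a u) x
      = (-2 : ℝ) * ∫ p, F p ∂(μ.prod μ) := by
    calc ∫ x in S, v x * nldivS S a (nlgrad a u) x
        = ∫ x, ∫ y, (-2 : ℝ) * F (x, y) ∂μ ∂μ := by
          rw [← hμ]; exact integral_congr_ae (Filter.Eventually.of_forall fun x => hg x)
      _ = ∫ p, (-2 : ℝ) * F p ∂(μ.prod μ) := integral_integral (hF.const_mul (-2 : ℝ))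
      _ = (-2 : ℝ) * ∫ p, F p ∂(μ.prod μ) := integral_const_mul _ _
  have rhs_eq : (∫ x in S, ∫ y in S, ⟪nlgrad a v x y, nlgrad a u x y⟫)
      = ∫ p, G p ∂(μ.prod μ) := by
    calc (∫ x in S, ∫ y in S, ⟪nlgrad a v x y, nlgrad a u x y⟫)
        = ∫ x, ∫ y, G (x, y) ∂μ ∂μ := by
          rw [← hμ]
          refine integral_congr_ae (Filter.Eventually.of_forall fun x => ?_)
          refine integral_congr_ae (Filter.Eventually.of_forall fun y => ?_)
          simp only [key2, hGdef]
      _ = ∫ p, G p ∂(μ.prod μ) := integral_integral hG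
  rw [lhs_eq, rhs_eq, hGint]
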